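/- arXiv:2301.13292 — 3 statements merged into one kernel-verified Lean document; each statement's English description precedes it below -/
import Mathlib

section
/- The function P(x, y) = -ln(F(x) - F(y)) is strictly convex on the open half-plane {(x, y) ∈ ℝ² : x > y}. -/
/-!
Strict convexity can be tested on lines. Along the line through `(x, y)` with direction
`(u, v) ≠ 0` the function is `-log G` with `G(t) = F(x + t u) - F(y + t v) > 0`, which is strictly
convex as soon as `G G'' < G'²`. As `φ' = -s φ`, at `t = 0` we get `G' = u φ(x) - v φ(y)` and
`G'' = v² y φ(y) - u² x φ(x)`, and integrating `(x - s) φ(s)` and `(s - y) φ(s)` over `[y, x]`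
turns `G'² - G G''` into the positive quantity
`φ(x) φ(y) (u - v)² + u² φ(x) ∫_y^x (x - s) φ(s) ds + v² φ(y) ∫_y^x (s - y) φ(s) ds`.
-/

/-- The Gaussian error function `F(z) = (1/√(2π)) ∫_{-∞}^z e^{-s²/2} ds`. -/
noncomputable def F (z : ℝ) : ℝ :=
  (1 / Real.sqrt (2 * Real.pi)) * ∫ s in Set.Iic z, Real.exp (-s ^ 2 / 2)

open Real MeasureTheory ProbabilityTheory Set

theorem StrictConvexOn.of_comp_lineMap {𝕜 E β : Type*} [Ring 𝕜] [PartialOrder 𝕜]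
    [Nontrivial 𝕜] [AddCommGroup E] [Module 𝕜 E] [AddCommMonoid β] [PartialOrder β]
    [SMul 𝕜 β] {s : Set E} {f : E → β} (hs : Convex 𝕜 s)
    (hf : ∀ p ∈ s, ∀ q ∈ s, p ≠ q →
      StrictConvexOn 𝕜 (AffineMap.lineMap (k := 𝕜) p q ⁻¹' s)
        (f ∘ AffineMap.lineMap p q)) :
    StrictConvexOn 𝕜 s f := by
  refine ⟨hs, fun p hp q hq hpq a b ha hb hab => ?_⟩
  have h := (hf p hp q hq hpq).2 (x := (0 : 𝕜)) (y := 1) (by simpa using hp) (by simpa using hq)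
    zero_ne_one ha hb hab
  simpa [AffineMap.lineMap_apply_module, ← eq_sub_of_add_eq hab] using h

theorem strictConvexOn_of_hasDerivWithinAt2_pos {D : Set ℝ} (hD : Convex ℝ D)
    {f f' f'' : ℝ → ℝ} (hf : ContinuousOn f D)
    (hf' : ∀ x ∈ interior D, HasDerivWithinAt f (f' x) (interior D) x)
    (hf'' : ∀ x ∈ interior D, HasDerivWithinAt f' (f'' x) (interior D) x)
    (hf''₀ : ∀ x ∈ interior D, 0 < f'' x) : StrictConvexOn ℝ D f := by
  have hderiv : (interior D).EqOn (deriv f) f' := deriv_eqOn isOpen_interior hf'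
  refine strictConvexOn_of_deriv2_pos hD hf fun x hx => ?_
  rw [Function.iterate_succ_apply, Function.iterate_one,
    deriv_eqOn isOpen_interior (fun y hy => (hf'' y hy).congr hderiv (hderiv hy)) hx]
  exact hf''₀ x hx

theorem strictConvexOn_neg_log_of_mul_deriv2_lt_sq {D : Set ℝ} (hD : Convex ℝ D)
    (hDo : IsOpen D) {g g' g'' : ℝ → ℝ} (hg : ∀ t ∈ D, HasDerivAt g (g' t) t)
    (hg' : ∀ t ∈ D, HasDerivAt g' (g'' t) t) (hpos : ∀ t ∈ D, 0 < g t)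
    (hlc : ∀ t ∈ D, g t * g'' t < g' t ^ 2) :
    StrictConvexOn ℝ D (fun t => -log (g t)) := by
  have hlog (t) (ht : t ∈ D) : HasDerivAt (fun t => -log (g t)) (-(g' t / g t)) t :=
    ((hg t ht).log (hpos t ht).ne').neg
  refine strictConvexOn_of_hasDerivWithinAt2_pos hD (f' := fun t => -(g' t / g t))
    (f'' := fun t => (g' t ^ 2 - g t * g'' t) / g t ^ 2)
    (fun t ht => (hlog t ht).continuousAt.continuousWithinAt) ?_ ?_ ?_ <;> rw [hDo.interior_eq]
  · exact fun t ht => (hlog t ht).hasDerivWithinAt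
  · intro t ht
    refine (((hg' t ht).div (hg t ht) (hpos t ht).ne').neg.congr_deriv ?_).hasDerivWithinAt
    ring
  · exact fun t ht => div_pos (sub_pos.2 (hlc t ht)) (pow_pos (hpos t ht) 2)

theorem hasDerivAt_gaussianPDFReal (μ : ℝ) (v : NNReal) (x : ℝ) :
    HasDerivAt (gaussianPDFReal μ v) (-((x - μ) / v) * gaussianPDFReal μ v x) x := by
  rw [gaussianPDFReal_def]
  have hexp := ((((hasDerivAt_id' x).sub_const μ).fun_pow 2).fun_neg.div_const (2 * (v : ℝ))).exp
  refine (hexp.const_mul (√(2 * π * v))⁻¹).congr_deriv ?_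
  simp only [Nat.cast_ofNat]
  ring

@[fun_prop]
theorem continuous_gaussianPDFReal (μ : ℝ) (v : NNReal) : Continuous (gaussianPDFReal μ v) :=
  continuous_iff_continuousAt.2 fun x => (hasDerivAt_gaussianPDFReal μ v x).continuousAt

local notation "φ" => gaussianPDFReal 0 1

theorem F_eq_integral_gaussianPDFReal (z : ℝ) : F z = ∫ s in Iic z, φ s := by
  rw [F, ← integral_const_mul]
  simp [gaussianPDFReal, div_eq_inv_mul]

theorem F_sub_F_eq_integral (x y : ℝ) : F x - F y = ∫ s in y..x, φ s := by
  rw [F_eq_integral_gaussianPDFReal, F_eq_integral_gaussianPDFReal,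
    intervalIntegral.integral_Iic_sub_Iic (integrable_gaussianPDFReal 0 1).integrableOn
      (integrable_gaussianPDFReal 0 1).integrableOn]

theorem hasDerivAt_F (z : ℝ) : HasDerivAt F (φ z) z := by
  have hF : F = fun w => F 0 + ∫ s in (0 : ℝ)..w, φ s :=
    funext fun w => by rw [← F_sub_F_eq_integral]; ring
  rw [hF]
  exact ((continuous_gaussianPDFReal 0 1).integral_hasStrictDerivAt 0 z).hasDerivAt.const_add _

theorem F_sub_F_pos {x y : ℝ} (h : y < x) : 0 < F x - F y := by
  rw [F_sub_F_eq_integral]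
  exact intervalIntegral.intervalIntegral_pos_of_pos_on
    ((continuous_gaussianPDFReal 0 1).intervalIntegrable _ _)
    (fun s _ => gaussianPDFReal_pos 0 1 s one_ne_zero) h

theorem integral_affine_mul_gaussianPDFReal (a b x y : ℝ) :
    ∫ s in y..x, (a * s + b) * φ s = b * (F x - F y) - a * (φ x - φ y) := by
  have hderiv (s : ℝ) : HasDerivAt (fun s => b * F s - a * φ s) ((a * s + b) * φ s) s := by
    refine (((hasDerivAt_F s).const_mul b).sub
      ((hasDerivAt_gaussianPDFReal 0 1 s).const_mul a)).congr_deriv ?_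
    simp only [sub_zero, NNReal.coe_one, div_one]
    ring
  rw [intervalIntegral.integral_eq_sub_of_hasDerivAt (fun s _ => hderiv s)
    ((by fun_prop : Continuous fun s => (a * s + b) * φ s).intervalIntegrable _ _)]
  ring

theorem F_sub_F_mul_lt_sq {x y : ℝ} (hyx : y < x) {u v : ℝ} (huv : u ≠ 0 ∨ v ≠ 0) :
    (F x - F y) * (v ^ 2 * (y * φ y) - u ^ 2 * (x * φ x)) < (u * φ x - v * φ y) ^ 2 := by
  have hφ (s : ℝ) : 0 < φ s := gaussianPDFReal_pos 0 1 s one_ne_zero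
  have hpos (a b : ℝ) (hab : ∀ s ∈ Ioo y x, 0 < a * s + b) :
      0 < b * (F x - F y) - a * (φ x - φ y) := by
    rw [← integral_affine_mul_gaussianPDFReal]
    exact intervalIntegral.intervalIntegral_pos_of_pos_on
      ((by fun_prop : Continuous fun s => (a * s + b) * φ s).intervalIntegrable _ _)
      (fun s hs => mul_pos (hab s hs) (hφ s)) hyx
  have hI₁ : 0 < x * (F x - F y) + (φ x - φ y) := by
    linarith [hpos (-1) x fun s hs => by linarith [hs.2]]
  have hI₂ : 0 < φ y - φ x - y * (F x - F y) := by
    linarith [hpos 1 (-y) fun s hs => by linarith [hs.1]]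
  have hsos : (u * φ x - v * φ y) ^ 2 - (F x - F y) * (v ^ 2 * (y * φ y) - u ^ 2 * (x * φ x)) =
      φ x * φ y * (u - v) ^ 2 + u ^ 2 * φ x * (x * (F x - F y) + (φ x - φ y))
        + v ^ 2 * φ y * (φ y - φ x - y * (F x - F y)) := by
    ring
  have hx := hφ x
  have hy := hφ y
  rw [← sub_pos, hsos]
  rcases huv with hu | hv <;> positivity

theorem convex_setOf_snd_lt_fst : Convex ℝ {p : ℝ × ℝ | p.2 < p.1} := by
  simpa [sub_neg] using
    convex_halfSpace_lt (LinearMap.snd ℝ ℝ ℝ - LinearMap.fst ℝ ℝ ℝ).isLinear 0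

theorem strictConvexOn_neg_log_F_sub_comp_lineMap {p q : ℝ × ℝ} (hpq : p ≠ q) :
    StrictConvexOn ℝ (AffineMap.lineMap (k := ℝ) p q ⁻¹' {p : ℝ × ℝ | p.2 < p.1})
      ((fun p : ℝ × ℝ => -log (F p.1 - F p.2)) ∘ AffineMap.lineMap p q) := by
  set X : ℝ → ℝ := ⇑(AffineMap.lineMap (k := ℝ) p.1 q.1)
  set Y : ℝ → ℝ := ⇑(AffineMap.lineMap (k := ℝ) p.2 q.2)
  have hmem (t : ℝ) :
      t ∈ AffineMap.lineMap (k := ℝ) p q ⁻¹' {p : ℝ × ℝ | p.2 < p.1} ↔ Y t < X t := by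
    simp [X, Y]
  have hX (t : ℝ) : HasDerivAt X (q.1 - p.1) t := AffineMap.hasDerivAt_lineMap
  have hY (t : ℝ) : HasDerivAt Y (q.2 - p.2) t := AffineMap.hasDerivAt_lineMap
  have huv : q.1 - p.1 ≠ 0 ∨ q.2 - p.2 ≠ 0 := by
    contrapose! hpq
    exact Prod.ext (sub_eq_zero.1 hpq.1).symm (sub_eq_zero.1 hpq.2).symm
  have hcomp : (fun p : ℝ × ℝ => -log (F p.1 - F p.2)) ∘ AffineMap.lineMap p q =
      fun t => -log (F (X t) - F (Y t)) := by
    ext t; simp [X, Y]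
  rw [hcomp]
  refine strictConvexOn_neg_log_of_mul_deriv2_lt_sq
    (convex_setOf_snd_lt_fst.affine_preimage _)
    ((isOpen_lt continuous_snd continuous_fst).preimage AffineMap.lineMap_continuous)
    (g' := fun t => (q.1 - p.1) * φ (X t) - (q.2 - p.2) * φ (Y t))
    (g'' := fun t => (q.2 - p.2) ^ 2 * (Y t * φ (Y t)) - (q.1 - p.1) ^ 2 * (X t * φ (X t)))
    (fun t _ => ?_) (fun t _ => ?_) (fun t ht => F_sub_F_pos ((hmem t).1 ht))
    (fun t ht => F_sub_F_mul_lt_sq ((hmem t).1 ht) huv)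
  · refine (((hasDerivAt_F _).comp t (hX t)).sub ((hasDerivAt_F _).comp t (hY t))).congr_deriv ?_
    ring
  · refine ((((hasDerivAt_gaussianPDFReal 0 1 _).comp t (hX t)).const_mul (q.1 - p.1)).sub
      (((hasDerivAt_gaussianPDFReal 0 1 _).comp t (hY t)).const_mul (q.2 - p.2))).congr_deriv ?_
    simp only [sub_zero, NNReal.coe_one, div_one]
    ring

theorem strictConvexOn_neg_log_F_diff :
    StrictConvexOn ℝ {p : ℝ × ℝ | p.2 < p.1}
      (fun p : ℝ × ℝ => -Real.log (F p.1 - F p.2)) :=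
  StrictConvexOn.of_comp_lineMap convex_setOf_snd_lt_fst fun _ _ _ _ hpq =>
    strictConvexOn_neg_log_F_sub_comp_lineMap hpq
end

section
/- The Hessian matrix of P(x, y) = -ln(F(x) - F(y)) at any point with x > y can be written as (F(x)-F(y))^{-2}·(R₁ + F'(x)F'(y)R₂), where R₁ is a diagonal matrix with positive diagonal entries F'(x)(F(x)-F(y))(x-z) and F'(y)(F(x)-F(y))(z-y) for some z ∈ (y,x), and R₂ = [[1,-1],[-1,1]]; hence the Hessian is positive definite. -/
/-- Its density `F'(x) = (1/√(2π)) e^{-x²/2}`. -/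
noncomputable def F' (x : ℝ) : ℝ :=
  (1 / Real.sqrt (2 * Real.pi)) * Real.exp (-x ^ 2 / 2)

/-- `P(x,y) = -ln(F(x) - F(y))`. -/
noncomputable def P (x y : ℝ) : ℝ := -Real.log (F x - F y)

/-- The Hessian matrix of `P` at `(x, y)`, given by the second partial derivatives. -/
noncomputable def hessP (x y : ℝ) : Matrix (Fin 2) (Fin 2) ℝ :=
  !![deriv (fun t => deriv (fun s => P s y) t) x,
     deriv (fun s => deriv (fun t => P t s) x) y;
     deriv (fun t => deriv (fun s => P t s) y) x,
     deriv (fun s => deriv (fun s' => P x s') s) y]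

/-!
Write `Δ = F x - F y > 0`. Since `F'' = -t F'`, differentiating `-log Δ` twice gives
`Δ² · hessP x y = !![x F'(x) Δ + F'(x)², -F'(x) F'(y); -F'(x) F'(y), F'(y)² - y F'(y) Δ]`.
Cauchy's mean value theorem for `F'` against `F` on `[y, x]` yields `z ∈ (y, x)` with
`F'(x) - F'(y) = -z Δ`; substituting `zΔ` for `F'(y) - F'(x)` splits off `F'(x) F'(y) R₂` and
leaves the positive diagonal `(F'(x) Δ (x - z), F'(y) Δ (z - y))`. A positive diagonal plus a
nonnegative multiple of the positive semidefinite `R₂ = (1, -1)ᵀ(1, -1)` is positive definite.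
-/

open Real MeasureTheory Set Matrix

section Gaussian

lemma integrable_exp_neg_sq_div_two : Integrable fun s : ℝ => exp (-s ^ 2 / 2) := by
  convert integrable_exp_neg_mul_sq (b := 1 / 2) (by norm_num) using 2 with s
  ring_nf

lemma F'_pos (t : ℝ) : 0 < F' t := by unfold F'; positivity

lemma hasDerivAt_F_s6 (t : ℝ) : HasDerivAt F (F' t) t := by
  have hcont : Continuous fun s : ℝ => exp (-s ^ 2 / 2) := by fun_prop
  have hsplit : ∀ w, F w = 1 / √(2 * π) *
      ((∫ s in Iic 0, exp (-s ^ 2 / 2)) + ∫ s in (0 : ℝ)..w, exp (-s ^ 2 / 2)) := fun w => by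
    rw [F, ← intervalIntegral.integral_Iic_sub_Iic integrable_exp_neg_sq_div_two.integrableOn
      integrable_exp_neg_sq_div_two.integrableOn]
    ring
  have hFTC : HasDerivAt (fun w => ∫ s in (0 : ℝ)..w, exp (-s ^ 2 / 2)) (exp (-t ^ 2 / 2)) t :=
    intervalIntegral.integral_hasDerivAt_right
      integrable_exp_neg_sq_div_two.intervalIntegrable
      hcont.aestronglyMeasurable.stronglyMeasurableAtFilter hcont.continuousAt
  rw [funext hsplit]
  simpa [F'] using (hFTC.const_add _).const_mul (1 / √(2 * π))

lemma hasDerivAt_F' (t : ℝ) : HasDerivAt F' (-t * F' t) t := by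
  have hexp : HasDerivAt (fun s : ℝ => -s ^ 2 / 2) (-t) t :=
    ((hasDerivAt_pow 2 t).fun_neg.div_const 2).congr_deriv (by push_cast; ring)
  exact (hexp.exp.const_mul (1 / √(2 * π))).congr_deriv (by rw [F']; ring)

lemma F_sub_pos {x y : ℝ} (hxy : y < x) : 0 < F x - F y :=
  sub_pos.2 (strictMono_of_hasDerivAt_pos hasDerivAt_F_s6 F'_pos hxy)

lemma exists_mem_Ioo_F'_sub_eq {x y : ℝ} (hxy : y < x) :
    ∃ z ∈ Ioo y x, F' x - F' y = -z * (F x - F y) := by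
  obtain ⟨z, hz, hcmvt⟩ := exists_ratio_hasDerivAt_eq_ratio_slope F F' hxy
    (fun t _ => (hasDerivAt_F_s6 t).continuousAt.continuousWithinAt)
    (fun t _ => hasDerivAt_F_s6 t) F' (fun t => -t * F' t)
    (fun t _ => (hasDerivAt_F' t).continuousAt.continuousWithinAt)
    (fun t _ => hasDerivAt_F' t)
  refine ⟨z, hz, mul_right_cancel₀ (F'_pos z).ne' ?_⟩
  linear_combination hcmvt

end Gaussian

section SecondDerivatives

variable {x y : ℝ}

lemma hasDerivAt_P_left {t : ℝ} (hyt : y < t) :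
    HasDerivAt (fun s => P s y) (-F' t / (F t - F y)) t :=
  (((hasDerivAt_F_s6 t).sub_const (F y)).log (F_sub_pos hyt).ne').fun_neg.congr_deriv (by ring)

lemma hasDerivAt_P_right {s : ℝ} (hsx : s < x) :
    HasDerivAt (P x) (F' s / (F x - F s)) s :=
  (((hasDerivAt_F_s6 s).const_sub (F x)).log (F_sub_pos hsx).ne').fun_neg.congr_deriv (by ring)

lemma deriv_deriv_P_xx (hxy : y < x) : deriv (fun t => deriv (fun s => P s y) t) x
    = (x * F' x * (F x - F y) + F' x ^ 2) / (F x - F y) ^ 2 := by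
  have hPx : (fun t => deriv (fun s => P s y) t) =ᶠ[nhds x] fun t => -F' t / (F t - F y) := by
    filter_upwards [Ioi_mem_nhds hxy] with t ht using (hasDerivAt_P_left ht).deriv
  rw [hPx.deriv_eq, ((hasDerivAt_F' x).fun_neg.fun_div ((hasDerivAt_F_s6 x).sub_const (F y))
    (F_sub_pos hxy).ne').deriv]
  ring

lemma deriv_deriv_P_xy (hxy : y < x) : deriv (fun s => deriv (fun t => P t s) x) y
    = -(F' x * F' y) / (F x - F y) ^ 2 := by
  have hPx : (fun s => deriv (fun t => P t s) x) =ᶠ[nhds y] fun s => -F' x / (F x - F s) := by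
    filter_upwards [Iio_mem_nhds hxy] with s hs using (hasDerivAt_P_left hs).deriv
  rw [hPx.deriv_eq, ((hasDerivAt_const y (-F' x)).fun_div ((hasDerivAt_F_s6 y).const_sub (F x))
    (F_sub_pos hxy).ne').deriv]
  ring

lemma deriv_deriv_P_yx (hxy : y < x) : deriv (fun t => deriv (fun s => P t s) y) x
    = -(F' x * F' y) / (F x - F y) ^ 2 := by
  have hPy : (fun t => deriv (fun s => P t s) y) =ᶠ[nhds x] fun t => F' y / (F t - F y) := by
    filter_upwards [Ioi_mem_nhds hxy] with t ht using (hasDerivAt_P_right ht).deriv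
  rw [hPy.deriv_eq, ((hasDerivAt_const x (F' y)).fun_div ((hasDerivAt_F_s6 x).sub_const (F y))
    (F_sub_pos hxy).ne').deriv]
  ring

lemma deriv_deriv_P_yy (hxy : y < x) : deriv (fun s => deriv (fun s' => P x s') s) y
    = (F' y ^ 2 - y * F' y * (F x - F y)) / (F x - F y) ^ 2 := by
  have hPy : (fun s => deriv (fun s' => P x s') s) =ᶠ[nhds y] fun s => F' s / (F x - F s) := by
    filter_upwards [Iio_mem_nhds hxy] with s hs using (hasDerivAt_P_right hs).deriv
  rw [hPy.deriv_eq,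
    ((hasDerivAt_F' y).fun_div ((hasDerivAt_F_s6 y).const_sub (F x)) (F_sub_pos hxy).ne').deriv]
  ring

lemma hessP_eq (hxy : y < x) : hessP x y = ((F x - F y) ^ 2)⁻¹ •
    !![x * F' x * (F x - F y) + F' x ^ 2, -(F' x * F' y);
       -(F' x * F' y), F' y ^ 2 - y * F' y * (F x - F y)] := by
  rw [hessP, deriv_deriv_P_xx hxy, deriv_deriv_P_xy hxy, deriv_deriv_P_yx hxy,
    deriv_deriv_P_yy hxy]
  ext i j
  fin_cases i <;> fin_cases j <;> simp [div_eq_inv_mul]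

end SecondDerivatives

lemma posSemidef_one_neg_one {R : Type*} [CommRing R] [PartialOrder R] [StarRing R]
    [StarOrderedRing R] : (!![(1 : R), -1; -1, 1]).PosSemidef := by
  convert posSemidef_vecMulVec_self_star ![(1 : R), -1] using 1
  ext i j
  fin_cases i <;> fin_cases j <;> simp [vecMulVec]

theorem hessP_decomposition_posDef (x y : ℝ) (hxy : y < x) :
    ∃ z ∈ Set.Ioo y x,
      hessP x y = ((F x - F y) ^ 2)⁻¹ •
        (Matrix.diagonal
            ![F' x * (F x - F y) * (x - z), F' y * (F x - F y) * (z - y)] +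
          (F' x * F' y) • !![(1 : ℝ), -1; -1, 1]) ∧
      (∀ i, 0 < (Matrix.diagonal
            ![F' x * (F x - F y) * (x - z), F' y * (F x - F y) * (z - y)]) i i) ∧
      (hessP x y).PosDef := by
  have hΔ := F_sub_pos hxy
  have hFx := F'_pos x
  have hFy := F'_pos y
  obtain ⟨z, hz, hmvt⟩ := exists_mem_Ioo_F'_sub_eq hxy
  have hdiag : ∀ i, 0 < (diagonal
      ![F' x * (F x - F y) * (x - z), F' y * (F x - F y) * (z - y)]) i i := by
    have := sub_pos.2 hz.1
    have := sub_pos.2 hz.2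
    simp only [Fin.forall_fin_two, diagonal_apply_eq, cons_val_zero, cons_val_one, cons_val_fin_one]
    constructor <;> positivity
  have hEq : hessP x y = ((F x - F y) ^ 2)⁻¹ • (diagonal
      ![F' x * (F x - F y) * (x - z), F' y * (F x - F y) * (z - y)] +
        (F' x * F' y) • !![(1 : ℝ), -1; -1, 1]) := by
    rw [hessP_eq hxy]
    congr 1
    ext i j
    fin_cases i <;> fin_cases j <;>
      simp only [Fin.zero_eta, Fin.mk_one, Fin.isValue, of_apply, cons_val', cons_val_zero,
        cons_val_one, cons_val_fin_one, Matrix.add_apply, Matrix.smul_apply, smul_eq_mul,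
        diagonal_apply_eq, diagonal_apply_ne, ne_eq, zero_ne_one, one_ne_zero, not_false_eq_true,
        zero_add, mul_one, mul_neg]
    · linear_combination F' x * hmvt
    · linear_combination -F' y * hmvt
  refine ⟨z, hz, hEq, hdiag, ?_⟩
  rw [hEq]
  exact ((PosDef.diagonal fun i => by simpa only [diagonal_apply_eq] using hdiag i).add_posSemidef
    (posSemidef_one_neg_one.smul (by positivity))).smul (by positivity)
end

section
/- The function x ↦ -ln F(x) is strictly convex on ℝ. -/
/-!
With `φ(s) = e^{-s²/2}`, the second derivative of `-log F` is `F'·(x F + F') / F²`, and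
`x F(x) + F'(x) = (1/√(2π)) ∫_{-∞}^x (x - s) φ(s) ds > 0`, because `∫_{-∞}^x (-s) φ(s) ds = φ(x)`
(`-s φ(s)` is the derivative of `φ`).
-/

open Real Set MeasureTheory Filter Topology

theorem strictConvexOn_neg_log_of_hasDerivAt {f f' f'' : ℝ → ℝ} (hf : ∀ x, 0 < f x)
    (hf' : ∀ x, HasDerivAt f (f' x) x) (hf'' : ∀ x, HasDerivAt f' (f'' x) x)
    (h : ∀ x, f x * f'' x < f' x ^ 2) :
    StrictConvexOn ℝ univ (fun x => -log (f x)) := by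
  have hderiv : deriv (fun x => -log (f x)) = fun x => -(f' x / f x) :=
    funext fun x => ((hf' x).log (hf x).ne').neg.deriv
  refine strictConvexOn_univ_of_deriv2_pos ?_ fun x => ?_
  · exact continuous_iff_continuousAt.2 fun x =>
      ((hf' x).log (hf x).ne').neg.differentiableAt.continuousAt
  · have h2 : HasDerivAt (fun y => -(f' y / f y))
        (-((f'' x * f x - f' x * f' x) / f x ^ 2)) x :=
      ((hf'' x).div (hf' x) (hf x).ne').neg
    rw [Function.iterate_succ_apply, Function.iterate_one, hderiv, h2.deriv]
    have hfx := hf x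
    exact neg_pos.2 (div_neg_of_neg_of_pos (by linarith [h x]) (by positivity))

theorem setIntegral_Iic_pos {f : ℝ → ℝ} {x : ℝ} (hint : IntegrableOn f (Iic x))
    (hnonneg : ∀ s ≤ x, 0 ≤ f s) (hpos : ∀ s < x, 0 < f s) :
    0 < ∫ s in Iic x, f s := by
  rw [setIntegral_pos_iff_support_of_nonneg_ae
    ((ae_restrict_mem measurableSet_Iic).mono hnonneg) hint]
  have hsub : Iio x ⊆ Function.support f ∩ Iic x := fun s hs =>
    ⟨(hpos s hs).ne', mem_Iic.2 (le_of_lt hs)⟩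
  calc (0 : ENNReal) < volume (Iio x) := by simp [volume_Iio]
    _ ≤ _ := measure_mono hsub

noncomputable def gaussianWeight (s : ℝ) : ℝ := exp (-s ^ 2 / 2)

theorem gaussianWeight_pos (s : ℝ) : 0 < gaussianWeight s := exp_pos _

theorem continuous_gaussianWeight : Continuous gaussianWeight := by
  unfold gaussianWeight; fun_prop

theorem gaussianWeight_eq (s : ℝ) : gaussianWeight s = exp (-(1 / 2) * s ^ 2) := by
  rw [gaussianWeight]; ring_nf

theorem integrable_gaussianWeight : Integrable gaussianWeight := by
  simpa only [← gaussianWeight_eq] using integrable_exp_neg_mul_sq (b := 1 / 2) (by norm_num)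

theorem integrable_neg_mul_gaussianWeight : Integrable fun s => -s * gaussianWeight s := by
  have h := (integrable_mul_exp_neg_mul_sq (b := 1 / 2) (by norm_num)).fun_neg
  simp only [← gaussianWeight_eq] at h
  simpa only [neg_mul] using h

theorem integrable_sub_mul_gaussianWeight (x : ℝ) :
    Integrable fun s => (x - s) * gaussianWeight s := by
  simpa only [sub_eq_add_neg, add_mul] using
    (integrable_gaussianWeight.const_mul x).fun_add integrable_neg_mul_gaussianWeight

theorem hasDerivAt_gaussianWeight (x : ℝ) :
    HasDerivAt gaussianWeight (-x * gaussianWeight x) x := by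
  have h : HasDerivAt (fun s : ℝ => -s ^ 2 / 2) (-x) x :=
    ((hasDerivAt_pow 2 x).neg.div_const 2).congr_deriv (by push_cast; ring)
  unfold gaussianWeight
  exact h.exp.congr_deriv (mul_comm _ _)

theorem tendsto_gaussianWeight_atBot : Tendsto gaussianWeight atBot (𝓝 0) := by
  have h : Tendsto (fun s : ℝ => s ^ 2 / 2) atBot atTop := by
    simpa [Function.comp_def] using ((tendsto_pow_atTop two_ne_zero).comp
      tendsto_neg_atBot_atTop).atTop_div_const (zero_lt_two' ℝ)
  unfold gaussianWeight
  simpa only [Function.comp_def, neg_div] using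
    tendsto_exp_atBot.comp (tendsto_neg_atTop_atBot.comp h)

theorem integral_Iic_neg_mul_gaussianWeight (x : ℝ) :
    ∫ s in Iic x, -s * gaussianWeight s = gaussianWeight x := by
  simpa using integral_Iic_of_hasDerivAt_of_tendsto' (fun y _ => hasDerivAt_gaussianWeight y)
    integrable_neg_mul_gaussianWeight.integrableOn
    tendsto_gaussianWeight_atBot

theorem hasDerivAt_integral_Iic {f : ℝ → ℝ} (hint : Integrable f) (hcont : Continuous f)
    (x : ℝ) : HasDerivAt (fun y => ∫ s in Iic y, f s) (f x) x := by
  have hsplit : (fun y => ∫ s in Iic y, f s) =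
      fun y => (∫ s in Iic 0, f s) + ∫ s in (0 : ℝ)..y, f s := funext fun y => by
    rw [← intervalIntegral.integral_Iic_sub_Iic hint.integrableOn hint.integrableOn]
    ring
  rw [hsplit]
  exact (intervalIntegral.integral_hasDerivAt_right hint.intervalIntegrable
    hcont.stronglyMeasurable.stronglyMeasurableAtFilter hcont.continuousAt).const_add _

theorem F_eq_integral_div : F = fun x => (∫ s in Iic x, gaussianWeight s) / √(2 * π) :=
  funext fun _ => one_div_mul_eq_div _ _

theorem F_pos (x : ℝ) : 0 < F x := by
  rw [F_eq_integral_div]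
  exact div_pos (setIntegral_Iic_pos integrable_gaussianWeight.integrableOn
    (fun s _ => (gaussianWeight_pos s).le) (fun s _ => gaussianWeight_pos s)) (by positivity)

theorem hasDerivAt_F_s7 (x : ℝ) : HasDerivAt F (gaussianWeight x / √(2 * π)) x := by
  rw [F_eq_integral_div]
  exact (hasDerivAt_integral_Iic integrable_gaussianWeight continuous_gaussianWeight x).div_const _

theorem integral_Iic_sub_mul_gaussianWeight (x : ℝ) :
    ∫ s in Iic x, (x - s) * gaussianWeight s =
      x * (∫ s in Iic x, gaussianWeight s) + gaussianWeight x := by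
  have hsplit : (fun s => (x - s) * gaussianWeight s) =
      fun s => x * gaussianWeight s + -s * gaussianWeight s := funext fun s => by ring
  rw [hsplit, integral_add (integrable_gaussianWeight.const_mul x).integrableOn
    integrable_neg_mul_gaussianWeight.integrableOn,
    integral_const_mul, integral_Iic_neg_mul_gaussianWeight]

theorem mul_F_add_pos (x : ℝ) : 0 < x * F x + gaussianWeight x / √(2 * π) := by
  have hint : 0 < ∫ s in Iic x, (x - s) * gaussianWeight s :=
    setIntegral_Iic_pos (integrable_sub_mul_gaussianWeight x).integrableOn
      (fun s hs => mul_nonneg (sub_nonneg.2 hs) (gaussianWeight_pos s).le)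
      (fun s hs => mul_pos (sub_pos.2 hs) (gaussianWeight_pos s))
  rw [integral_Iic_sub_mul_gaussianWeight] at hint
  have hF : x * F x + gaussianWeight x / √(2 * π) =
      (x * (∫ s in Iic x, gaussianWeight s) + gaussianWeight x) / √(2 * π) := by
    rw [F_eq_integral_div]; ring
  rw [hF]
  positivity

theorem strictConvexOn_neg_log_F :
    StrictConvexOn ℝ Set.univ (fun x : ℝ => -Real.log (F x)) := by
  refine strictConvexOn_neg_log_of_hasDerivAt F_pos hasDerivAt_F_s7
    (f'' := fun x => -x * gaussianWeight x / √(2 * π))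
    (fun x => (hasDerivAt_gaussianWeight x).div_const _) fun x => ?_
  have hF' : 0 < gaussianWeight x / √(2 * π) := by have := gaussianWeight_pos x; positivity
  have hkey := mul_pos hF' (mul_F_add_pos x)
  calc F x * (-x * gaussianWeight x / √(2 * π))
      = -(x * F x) * (gaussianWeight x / √(2 * π)) := by ring
    _ < (gaussianWeight x / √(2 * π)) ^ 2 := by linarith
end
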